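/- The sequence of harmonic numbers H_k = ∑_{i=1}^k 1/k is not eventually equal to any rational function: there is no rational function f ∈ ℚ(x) and index d such that H_k = f(k) for all k ≥ d. -/

import Mathlib

def H (k : ℕ) : ℚ := ∑ i ∈ Finset.Icc 1 k, (1 : ℚ) / i

/-!
If `H_k = P(k)/Q(k)` for large `k`, compare degrees. When `deg P ≤ deg Q` the rational function
is bounded, but `H_k ≥ log (k + 1)` is unbounded. When `deg P > deg Q` it grows at least
linearly, but `H_k ≤ 1 + log k = o(k)`.
-/

open Filter Asymptotics Polynomial

namespace Polynomial

variable {𝕜 : Type*} [NormedField 𝕜] [LinearOrder 𝕜] [IsStrictOrderedRing 𝕜] [OrderTopology 𝕜]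

theorem isBigO_div_of_degree_mul_le {P₁ Q₁ P₂ Q₂ : 𝕜[X]} (hQ₁ : Q₁ ≠ 0) (hQ₂ : Q₂ ≠ 0)
    (h : (P₁ * Q₂).degree ≤ (P₂ * Q₁).degree) :
    (fun x => P₁.eval x / Q₁.eval x) =O[atTop] fun x => P₂.eval x / Q₂.eval x := by
  have hcross := (isBigO_atTop_of_degree_le _ _ h).mul
    (isBigO_refl (fun x => (Q₁.eval x * Q₂.eval x)⁻¹) atTop)
  refine hcross.congr' ?_ ?_ <;>
  filter_upwards [eventually_atTop_not_isRoot Q₁ hQ₁, eventually_atTop_not_isRoot Q₂ hQ₂]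
    with x h₁ h₂ <;>
  · rw [IsRoot.def] at h₁ h₂
    rw [eval_mul]
    field_simp

theorem div_isBigO_one_or_id_isBigO_div (P : 𝕜[X]) {Q : 𝕜[X]} (hQ : Q ≠ 0) :
    (fun x => P.eval x / Q.eval x) =O[atTop] (fun _ => (1 : 𝕜)) ∨
      (fun x => x) =O[atTop] fun x => P.eval x / Q.eval x := by
  rcases le_or_gt P.degree Q.degree with h | h
  · left
    simpa using isBigO_div_of_degree_mul_le (P₂ := 1) (Q₂ := 1) hQ one_ne_zero (by simpa using h)
  · right
    have h' : (X * Q).degree ≤ (P * 1).degree := by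
      rw [mul_comm, degree_mul_X, mul_one]
      exact Nat.WithBot.add_one_le_of_lt h
    simpa using isBigO_div_of_degree_mul_le one_ne_zero hQ h'

end Polynomial

theorem Rat.isLittleO_cast_real_iff {α : Type*} {l : Filter α} {f g : α → ℚ} :
    (fun x => (f x : ℝ)) =o[l] (fun x => (g x : ℝ)) ↔ f =o[l] g := by
  rw [← isLittleO_norm_norm]
  simp only [Rat.norm_cast_real]
  exact isLittleO_norm_norm

theorem one_isLittleO_harmonic : (fun _ => (1 : ℚ)) =o[atTop] harmonic := by
  rw [← Rat.isLittleO_cast_real_iff, Rat.cast_one, isLittleO_one_left_iff]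
  have hlog : Tendsto (fun n : ℕ => Real.log ↑(n + 1)) atTop atTop :=
    Real.tendsto_log_atTop.comp (tendsto_natCast_atTop_atTop.comp (tendsto_add_atTop_nat 1))
  exact tendsto_norm_atTop_atTop.comp (tendsto_atTop_mono log_add_one_le_harmonic hlog)

theorem harmonic_isLittleO_natCast : harmonic =o[atTop] (fun n => (n : ℚ)) := by
  rw [← Rat.isLittleO_cast_real_iff]
  simp only [Rat.cast_natCast]
  have hbound : (fun n => (harmonic n : ℝ)) =O[atTop] fun n : ℕ => 1 + Real.log n :=
    IsBigO.of_bound' <| .of_forall fun n => by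
      rw [Real.norm_of_nonneg ((Real.log_nonneg (by simp)).trans (log_add_one_le_harmonic n))]
      exact (harmonic_le_one_add_log n).trans (Real.le_norm_self _)
  refine hbound.trans_isLittleO (IsLittleO.add ?_ ?_)
  · exact isLittleO_const_left.2 (.inr (tendsto_norm_atTop_atTop.comp tendsto_natCast_atTop_atTop))
  · exact Real.isLittleO_log_id_atTop.comp_tendsto tendsto_natCast_atTop_atTop

theorem H_eq_harmonic (k : ℕ) : H k = harmonic k := by
  simp [H, harmonic_eq_sum_Icc]

/-- The harmonic number sequence is not eventually equal to any rational function: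
there is no `f ∈ ℚ(x)` and index `d` with `H_k = f(k)` for all `k ≥ d`. -/
theorem stmt19 :
    ¬ ∃ (f : RatFunc ℚ) (d : ℕ),
        ∀ k ≥ d, H k = RatFunc.eval (RingHom.id ℚ) (k : ℚ) f := by
  rintro ⟨f, d, hf⟩
  set r : ℕ → ℚ := fun k => f.num.eval (k : ℚ) / f.denom.eval (k : ℚ)
  have hr : r =ᶠ[atTop] harmonic := by
    filter_upwards [eventually_ge_atTop d] with k hk
    rw [← H_eq_harmonic, hf k hk]
    rfl
  rcases f.num.div_isBigO_one_or_id_isBigO_div f.denom_ne_zero with hbdd | hlin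
  · have hbounded : harmonic =O[atTop] fun _ => (1 : ℚ) :=
      (hbdd.comp_tendsto tendsto_natCast_atTop_atTop).congr' hr .rfl
    exact isLittleO_irrefl (.of_forall fun _ => one_ne_zero)
      (one_isLittleO_harmonic.trans_isBigO hbounded)
  · have hlinear : (fun k : ℕ => (k : ℚ)) =O[atTop] harmonic :=
      (hlin.comp_tendsto tendsto_natCast_atTop_atTop).congr' .rfl hr
    exact isLittleO_irrefl ((eventually_ne_atTop 0).frequently.mono fun _ => Nat.cast_ne_zero.2)
      (hlinear.trans_isLittleO harmonic_isLittleO_natCast)
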